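/- arXiv:2501.08041 — 2 statements merged into one kernel-verified Lean document; each statement's English description precedes it below -/
import Mathlib

section
/- Let H be a quasitriangular Hopf algebra with R = Σ aᵢ ⊗ bᵢ, and set u = Σ S(bᵢ) aᵢ ∈ H. Then for every a ∈ H one has u · a = S²(a) · u, i.e. the Drinfel'd element u intertwines the square of the antipode with the identity. -/
open TensorProduct

/-- A quasitriangular structure (R-matrix) on a Hopf algebra `H` over `k`. -/
structure IsRMatrix (k H : Type*) [CommRing k] [Ring H] [HopfAlgebra k H]
    (r : H ⊗[k] H) : Prop where
  invertible : ∃ r' : H ⊗[k] H, r * r' = 1 ∧ r' * r = 1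
  hexagon_left :
    (TensorProduct.map (Coalgebra.comul (R := k)) LinearMap.id) r =
      (Algebra.TensorProduct.map
          (Algebra.TensorProduct.includeLeft : H →ₐ[k] H ⊗[k] H) (AlgHom.id k H)) r *
        (Algebra.TensorProduct.map
          (Algebra.TensorProduct.includeRight : H →ₐ[k] H ⊗[k] H) (AlgHom.id k H)) r
  hexagon_right :
    (TensorProduct.map LinearMap.id (Coalgebra.comul (R := k))) r =
      (Algebra.TensorProduct.map (AlgHom.id k H)
          (Algebra.TensorProduct.includeRight : H →ₐ[k] H ⊗[k] H)) r *
        (Algebra.TensorProduct.map (AlgHom.id k H)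
          (Algebra.TensorProduct.includeLeft : H →ₐ[k] H ⊗[k] H)) r
  intertwine : ∀ a : H,
    r * Coalgebra.comul (R := k) a = (TensorProduct.comm k H H) (Coalgebra.comul (R := k) a) * r

/-- The Drinfel'd element `u = m ∘ (S ⊗ id) (R^T)` of a quasitriangular Hopf algebra. -/
noncomputable def drinfeldElement (k H : Type*) [CommRing k] [Ring H] [HopfAlgebra k H]
    (r : H ⊗[k] H) : H :=
  LinearMap.mul' k H
    ((TensorProduct.map (HopfAlgebra.antipode (R := k)) LinearMap.id)
      ((TensorProduct.comm k H H) r))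

namespace DrinfeldAux

section

open Coalgebra HopfAlgebra

set_option maxHeartbeats 1000000
set_option synthInstance.maxHeartbeats 200000

variable {k H : Type*} [CommRing k] [Ring H] [HopfAlgebra k H]

local notation "𝒮" => (HopfAlgebra.antipode (R := k) (A := H))
local notation "Δ" => (Coalgebra.comul (R := k) (A := H))
local notation "ε" => (Coalgebra.counit (R := k) (A := H))
local notation "μ" => (LinearMap.mul' k H)

theorem antipode_one' : 𝒮 (1 : H) = 1 := by
  have h := HopfAlgebra.mul_antipode_rTensor_comul_apply (R:=k) (A:=H) (a := 1)
  simpa [Algebra.TensorProduct.one_def] using h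

theorem antipode_algebraMap' (c : k) : 𝒮 (algebraMap k H c) = algebraMap k H c := by
  rw [Algebra.algebraMap_eq_smul_one, map_smul, antipode_one']

/-- `x ⊗ y ↦ S y * S x`. -/
noncomputable def nu2 : H ⊗[k] H →ₗ[k] H :=
  μ ∘ₗ map 𝒮 𝒮 ∘ₗ (TensorProduct.comm k H H).toLinearMap

@[simp] lemma nu2_tmul (x y : H) : (nu2 (x ⊗ₜ[k] y) : H) = 𝒮 y * 𝒮 x := rfl

noncomputable def G2 : (H ⊗[k] H) ⊗[k] (H ⊗[k] H) →ₗ[k] H :=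
  μ ∘ₗ map μ nu2 ∘ₗ (tensorTensorTensorComm k H H H H).toLinearMap

@[simp] lemma G2_tmul (x₁ x₂ y₁ y₂ : H) :
    (G2 ((x₁ ⊗ₜ[k] x₂) ⊗ₜ[k] (y₁ ⊗ₜ[k] y₂)) : H) = (x₁ * y₁) * (𝒮 y₂ * 𝒮 x₂) := rfl

noncomputable def psi6 :
    (H ⊗[k] (H ⊗[k] H)) ⊗[k] (H ⊗[k] (H ⊗[k] H)) →ₗ[k] H :=
  μ ∘ₗ ((LinearMap.mul' k H).lTensor H) ∘ₗ map (𝒮 ∘ₗ μ) (map μ nu2) ∘ₗ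
    ((tensorTensorTensorComm k H H H H).toLinearMap.lTensor (H ⊗[k] H)) ∘ₗ
    (tensorTensorTensorComm k H (H ⊗[k] H) H (H ⊗[k] H)).toLinearMap

lemma psi6_apply (x₁ y₁ : H) (v w : H ⊗[k] H) :
    (psi6 ((x₁ ⊗ₜ[k] v) ⊗ₜ[k] (y₁ ⊗ₜ[k] w)) : H) = 𝒮 (x₁ * y₁) * G2 (v ⊗ₜ[k] w) := by
  simp [psi6, G2]

/-- `(v₁ ⊗ v₂) ⊗ c ↦ v₁ * (c * S v₂)` -/
noncomputable def K' : (H ⊗[k] H) ⊗[k] H →ₗ[k] H :=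
  μ ∘ₗ ((μ ∘ₗ map LinearMap.id 𝒮 ∘ₗ (TensorProduct.comm k H H).toLinearMap).lTensor H) ∘ₗ
    (TensorProduct.assoc k H H H).toLinearMap

@[simp] lemma K'_tmul (v₁ v₂ c : H) :
    (K' ((v₁ ⊗ₜ[k] v₂) ⊗ₜ[k] c) : H) = v₁ * (c * 𝒮 v₂) := rfl

lemma G2_eq_K' (v w : H ⊗[k] H) :
    (G2 (v ⊗ₜ[k] w) : H) = K' (v ⊗ₜ[k] μ (LinearMap.lTensor H 𝒮 w)) := by
  induction v using TensorProduct.induction_on with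
  | zero => simp
  | add p q hp hq => simp only [add_tmul, map_add, hp, hq]
  | tmul v₁ v₂ =>
    induction w using TensorProduct.induction_on with
    | zero => simp
    | add p q hp hq => simp only [tmul_add, add_tmul, map_add, hp, hq]
    | tmul w₁ w₂ => simp [mul_assoc]

lemma K'_algebraMap (c : k) (v : H ⊗[k] H) :
    (K' (v ⊗ₜ[k] algebraMap k H c) : H) = c • μ (LinearMap.lTensor H 𝒮 v) := by
  induction v using TensorProduct.induction_on with
  | zero => simp
  | add p q hp hq => simp only [add_tmul, map_add, hp, hq, smul_add]
  | tmul v₁ v₂ =>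
    simp [Algebra.smul_def, Algebra.commutes, mul_assoc]

lemma G2_comul_comul (x y : H) :
    (G2 ((Δ x) ⊗ₜ[k] (Δ y)) : H) = algebraMap k H (ε x * ε y) := by
  rw [G2_eq_K', HopfAlgebra.mul_antipode_lTensor_comul_apply, K'_algebraMap,
    HopfAlgebra.mul_antipode_lTensor_comul_apply, Algebra.smul_def, ← map_mul,
    mul_comm (ε y) (ε x)]

noncomputable def epse : H ⊗[k] H →ₗ[k] k := LinearMap.mul' k k ∘ₗ map ε ε

@[simp] lemma epse_tmul (x y : H) : (epse (x ⊗ₜ[k] y) : k) = ε x * ε y := rfl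

noncomputable def F1 : (H ⊗[k] H) ⊗[k] (H ⊗[k] H) →ₗ[k] H :=
  μ ∘ₗ map (𝒮 ∘ₗ μ) (Algebra.linearMap k H ∘ₗ epse) ∘ₗ
    (tensorTensorTensorComm k H H H H).toLinearMap

@[simp] lemma F1_tmul (x₁ x₂ y₁ y₂ : H) :
    (F1 ((x₁ ⊗ₜ[k] x₂) ⊗ₜ[k] (y₁ ⊗ₜ[k] y₂)) : H) =
      𝒮 (x₁ * y₁) * algebraMap k H (ε x₂ * ε y₂) := rfl

lemma hW1 (u u' : H ⊗[k] H) :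
    (psi6 (((Δ).lTensor H u) ⊗ₜ[k] ((Δ).lTensor H u')) : H) = F1 (u ⊗ₜ[k] u') := by
  induction u using TensorProduct.induction_on with
  | zero => simp
  | add p q hp hq => simp only [map_add, add_tmul, hp, hq]
  | tmul x₁ x₂ =>
    induction u' using TensorProduct.induction_on with
    | zero => simp
    | add p q hp hq => simp only [map_add, tmul_add, hp, hq]
    | tmul y₁ y₂ =>
      rw [LinearMap.lTensor_tmul, LinearMap.lTensor_tmul, psi6_apply, G2_comul_comul, F1_tmul]

lemma hF1a (P Q : H ⊗[k] H) :
    (F1 (P ⊗ₜ[k] Q) : H) = μ (map 𝒮 (Algebra.linearMap k H ∘ₗ ε) (P * Q)) := by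
  induction P using TensorProduct.induction_on with
  | zero => simp
  | add p q hp hq => simp only [add_tmul, add_mul, map_add, hp, hq]
  | tmul p₁ p₂ =>
    induction Q using TensorProduct.induction_on with
    | zero => simp
    | add p q hp hq => simp only [tmul_add, mul_add, map_add, hp, hq]
    | tmul q₁ q₂ =>
      simp [Algebra.TensorProduct.tmul_mul_tmul]

lemma hSc (c : H) : μ (map 𝒮 (Algebra.linearMap k H ∘ₗ ε) (Δ c)) = 𝒮 c := by
  have h : (map 𝒮 (Algebra.linearMap k H ∘ₗ ε) : H ⊗[k] H →ₗ[k] H ⊗[k] H) =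
      map 𝒮 (Algebra.linearMap k H) ∘ₗ LinearMap.lTensor H ε := by
    apply TensorProduct.ext'; intro x y; simp
  rw [h, LinearMap.comp_apply, Coalgebra.lTensor_counit_comul]
  simp

noncomputable def F2 : (H ⊗[k] H) ⊗[k] (H ⊗[k] H) →ₗ[k] H :=
  μ ∘ₗ map (Algebra.linearMap k H ∘ₗ epse) nu2 ∘ₗ
    (tensorTensorTensorComm k H H H H).toLinearMap

@[simp] lemma F2_tmul (x₁ x₂ y₁ y₂ : H) :
    (F2 ((x₁ ⊗ₜ[k] x₂) ⊗ₜ[k] (y₁ ⊗ₜ[k] y₂)) : H) =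
      algebraMap k H (ε x₁ * ε y₁) * (𝒮 y₂ * 𝒮 x₂) := rfl

lemma hK (v w : H ⊗[k] H) (x₂ y₂ : H) :
    (psi6 ((TensorProduct.assoc k H H H (v ⊗ₜ[k] x₂)) ⊗ₜ[k]
        (TensorProduct.assoc k H H H (w ⊗ₜ[k] y₂))) : H) =
      μ (LinearMap.rTensor H 𝒮 (v * w)) * (𝒮 y₂ * 𝒮 x₂) := by
  induction v using TensorProduct.induction_on with
  | zero => simp
  | add p q hp hq => simp only [add_tmul, add_mul, map_add, hp, hq]
  | tmul c d =>
    induction w using TensorProduct.induction_on with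
    | zero => simp
    | add p q hp hq => simp only [add_tmul, tmul_add, mul_add, add_mul, map_add, hp, hq]
    | tmul e f =>
      rw [TensorProduct.assoc_tmul, TensorProduct.assoc_tmul, psi6_apply,
        Algebra.TensorProduct.tmul_mul_tmul, G2_tmul, LinearMap.rTensor_tmul,
        LinearMap.mul'_apply]
      simp [mul_assoc]

lemma hW2 (u u' : H ⊗[k] H) :
    (psi6 ((TensorProduct.assoc k H H H ((Δ).rTensor H u)) ⊗ₜ[k]
        (TensorProduct.assoc k H H H ((Δ).rTensor H u'))) : H) = F2 (u ⊗ₜ[k] u') := by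
  induction u using TensorProduct.induction_on with
  | zero => simp
  | add p q hp hq => simp only [map_add, add_tmul, hp, hq]
  | tmul x₁ x₂ =>
    induction u' using TensorProduct.induction_on with
    | zero => simp
    | add p q hp hq => simp only [map_add, tmul_add, hp, hq]
    | tmul y₁ y₂ =>
      rw [LinearMap.rTensor_tmul, LinearMap.rTensor_tmul, hK, ← Bialgebra.comul_mul,
        HopfAlgebra.mul_antipode_rTensor_comul_apply, Bialgebra.counit_mul, F2_tmul]

noncomputable def ctr : H ⊗[k] H →ₗ[k] H := μ ∘ₗ map (Algebra.linearMap k H ∘ₗ ε) 𝒮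

@[simp] lemma ctr_tmul (x y : H) : (ctr (x ⊗ₜ[k] y) : H) = algebraMap k H (ε x) * 𝒮 y := rfl

lemma hF2a (P Q : H ⊗[k] H) : (F2 (P ⊗ₜ[k] Q) : H) = ctr Q * ctr P := by
  induction P using TensorProduct.induction_on with
  | zero => simp
  | add p q hp hq => simp only [add_tmul, map_add, hp, hq, mul_add]
  | tmul p₁ p₂ =>
    induction Q using TensorProduct.induction_on with
    | zero => simp
    | add p q hp hq => simp only [tmul_add, map_add, hp, hq, add_mul]
    | tmul q₁ q₂ =>
      simp only [F2_tmul, ctr_tmul, map_mul, ← Algebra.smul_def, smul_mul_assoc,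
        mul_smul_comm, smul_smul, mul_assoc, mul_comm]

lemma hctr (a : H) : (ctr (Δ a) : H) = 𝒮 a := by
  have h : (map (Algebra.linearMap k H ∘ₗ ε) 𝒮 : H ⊗[k] H →ₗ[k] H ⊗[k] H) =
      map (Algebra.linearMap k H) 𝒮 ∘ₗ LinearMap.rTensor H ε := by
    apply TensorProduct.ext'; intro x y; simp
  rw [ctr, LinearMap.comp_apply, h, LinearMap.comp_apply, Coalgebra.rTensor_counit_comul]
  simp

theorem antipode_mul' (a b : H) : 𝒮 (a * b) = 𝒮 b * 𝒮 a := by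
  have e1 : (psi6 (((Δ).lTensor H (Δ a)) ⊗ₜ[k] ((Δ).lTensor H (Δ b))) : H) = 𝒮 (a * b) := by
    rw [hW1, hF1a, ← Bialgebra.comul_mul, hSc]
  rw [← e1, ← Coalgebra.coassoc_apply a, ← Coalgebra.coassoc_apply b, hW2, hF2a, hctr, hctr]

/-- `x ⊗ y ↦ S y * x`. -/
noncomputable def psiD : H ⊗[k] H →ₗ[k] H :=
  μ ∘ₗ map 𝒮 LinearMap.id ∘ₗ (TensorProduct.comm k H H).toLinearMap

@[simp] lemma psiD_tmul (x y : H) : (psiD (x ⊗ₜ[k] y) : H) = 𝒮 y * x := rfl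

/-- `(x ⊗ y) ⊗ z ↦ S²(z) * (S y * x)`. -/
noncomputable def phiD : (H ⊗[k] H) ⊗[k] H →ₗ[k] H :=
  μ ∘ₗ map (𝒮 ∘ₗ 𝒮) psiD ∘ₗ (TensorProduct.comm k (H ⊗[k] H) H).toLinearMap

@[simp] lemma phiD_tmul (x y z : H) :
    (phiD ((x ⊗ₜ[k] y) ⊗ₜ[k] z) : H) = 𝒮 (𝒮 z) * (𝒮 y * x) := rfl

/-- `c₁ ⊗ c₂ ↦ S(S c₂) * S c₁`. -/
noncomputable def B1 : H ⊗[k] H →ₗ[k] H :=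
  μ ∘ₗ map (𝒮 ∘ₗ 𝒮) 𝒮 ∘ₗ (TensorProduct.comm k H H).toLinearMap

lemma B1_eq : (B1 : H ⊗[k] H →ₗ[k] H) = 𝒮 ∘ₗ μ ∘ₗ LinearMap.lTensor H 𝒮 := by
  apply TensorProduct.ext'; intro x y
  simp [B1, antipode_mul']

lemma B1_comul (c : H) : (B1 (Δ c) : H) = algebraMap k H (ε c) := by
  rw [B1_eq]
  simp only [LinearMap.comp_apply, HopfAlgebra.mul_antipode_lTensor_comul_apply,
    antipode_algebraMap']

lemma pi1 (s t x : H) (v : H ⊗[k] H) :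
    (phiD (((s ⊗ₜ[k] t) ⊗ₜ[k] (1 : H)) * (TensorProduct.assoc k H H H).symm (x ⊗ₜ[k] v)) : H) =
      B1 v * (𝒮 t * (s * x)) := by
  induction v using TensorProduct.induction_on with
  | zero => simp
  | add p q hp hq => simp only [tmul_add, map_add, mul_add, add_mul, hp, hq]
  | tmul c₁ c₂ =>
    rw [TensorProduct.assoc_symm_tmul, Algebra.TensorProduct.tmul_mul_tmul,
      Algebra.TensorProduct.tmul_mul_tmul, one_mul, phiD_tmul]
    simp [B1, antipode_mul', mul_assoc]

lemma pi2 (s t : H) (u : H ⊗[k] H) :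
    (phiD (((s ⊗ₜ[k] t) ⊗ₜ[k] (1 : H)) *
        (TensorProduct.assoc k H H H).symm ((Δ).lTensor H u)) : H) =
      μ (map (LinearMap.mulLeft k (𝒮 t * s)) (Algebra.linearMap k H ∘ₗ ε) u) := by
  induction u using TensorProduct.induction_on with
  | zero => simp
  | add p q hp hq => simp only [map_add, mul_add, hp, hq]
  | tmul x y =>
    rw [LinearMap.lTensor_tmul, pi1, B1_comul]
    simp only [map_tmul, LinearMap.mul'_apply, LinearMap.mulLeft_apply,
      LinearMap.comp_apply, Algebra.linearMap_apply]
    rw [← Algebra.commutes (ε y)]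
    simp [mul_assoc]

lemma drinfeld_i (a : H) (r : H ⊗[k] H) :
    (phiD ((r ⊗ₜ[k] (1 : H)) * ((Δ).rTensor H (Δ a))) : H) = psiD r * a := by
  induction r using TensorProduct.induction_on with
  | zero => simp
  | add p q hp hq => simp only [add_tmul, add_mul, map_add, hp, hq]
  | tmul s t =>
    rw [← Coalgebra.coassoc_symm_apply a, pi2]
    have h : (map (LinearMap.mulLeft k (𝒮 t * s)) (Algebra.linearMap k H ∘ₗ ε) :
        H ⊗[k] H →ₗ[k] H ⊗[k] H) =
        map (LinearMap.mulLeft k (𝒮 t * s)) (Algebra.linearMap k H) ∘ₗ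
          LinearMap.lTensor H ε := by
      apply TensorProduct.ext'; intro x y; simp
    rw [h, LinearMap.comp_apply, Coalgebra.lTensor_counit_comul]
    simp [mul_assoc]

lemma pii1 (s t z : H) (v : H ⊗[k] H) :
    (phiD ((((TensorProduct.comm k H H).toLinearMap v) ⊗ₜ[k] z) * ((s ⊗ₜ[k] t) ⊗ₜ[k] (1 : H))) : H) =
      (𝒮 (𝒮 z) * 𝒮 t) * (μ (LinearMap.rTensor H 𝒮 v) * s) := by
  induction v using TensorProduct.induction_on with
  | zero => simp
  | add p q hp hq => simp only [map_add, add_tmul, add_mul, mul_add, hp, hq]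
  | tmul c₁ c₂ =>
    simp only [LinearEquiv.coe_coe, TensorProduct.comm_tmul,
      Algebra.TensorProduct.tmul_mul_tmul, mul_one, phiD_tmul]
    simp [antipode_mul', mul_assoc]

lemma pii2 (s t : H) (u : H ⊗[k] H) :
    (phiD (((((TensorProduct.comm k H H).toLinearMap ∘ₗ Δ).rTensor H) u) *
        ((s ⊗ₜ[k] t) ⊗ₜ[k] (1 : H))) : H) =
      μ (map (Algebra.linearMap k H ∘ₗ ε)
          (LinearMap.mulRight k (𝒮 t * s) ∘ₗ 𝒮 ∘ₗ 𝒮) u) := by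
  induction u using TensorProduct.induction_on with
  | zero => simp
  | add p q hp hq => simp only [map_add, add_mul, hp, hq]
  | tmul x y =>
    rw [LinearMap.rTensor_tmul, LinearMap.comp_apply, pii1,
      HopfAlgebra.mul_antipode_rTensor_comul_apply]
    simp only [map_tmul, LinearMap.mul'_apply, LinearMap.mulRight_apply,
      LinearMap.comp_apply, Algebra.linearMap_apply]
    simp only [← Algebra.smul_def, mul_smul_comm, smul_mul_assoc, mul_assoc]

lemma drinfeld_ii (a : H) (r : H ⊗[k] H) :
    (phiD (((((TensorProduct.comm k H H).toLinearMap ∘ₗ Δ).rTensor H) (Δ a)) *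
        (r ⊗ₜ[k] (1 : H))) : H) = 𝒮 (𝒮 a) * psiD r := by
  induction r using TensorProduct.induction_on with
  | zero => simp
  | add p q hp hq => simp only [add_tmul, mul_add, map_add, hp, hq]
  | tmul s t =>
    rw [pii2]
    have h : (map (Algebra.linearMap k H ∘ₗ ε)
        (LinearMap.mulRight k (𝒮 t * s) ∘ₗ 𝒮 ∘ₗ 𝒮) : H ⊗[k] H →ₗ[k] H ⊗[k] H) =
        map (Algebra.linearMap k H) (LinearMap.mulRight k (𝒮 t * s) ∘ₗ 𝒮 ∘ₗ 𝒮) ∘ₗ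
          LinearMap.rTensor H ε := by
      apply TensorProduct.ext'; intro x y; simp
    rw [h, LinearMap.comp_apply, Coalgebra.rTensor_counit_comul]
    simp [mul_assoc]

lemma lemA (r : H ⊗[k] H)
    (hr : ∀ a : H, r * Δ a = (TensorProduct.comm k H H) (Δ a) * r) (w : H ⊗[k] H) :
    (r ⊗ₜ[k] (1 : H)) * ((Δ).rTensor H w) =
      (((TensorProduct.comm k H H).toLinearMap ∘ₗ Δ).rTensor H w) * (r ⊗ₜ[k] (1 : H)) := by
  induction w using TensorProduct.induction_on with
  | zero => simp
  | add p q hp hq => simp only [map_add, mul_add, add_mul, hp, hq]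
  | tmul x y =>
    rw [LinearMap.rTensor_tmul, LinearMap.rTensor_tmul,
      Algebra.TensorProduct.tmul_mul_tmul, Algebra.TensorProduct.tmul_mul_tmul,
      one_mul, mul_one, hr x]
    simp

theorem drinfeld_main (r : H ⊗[k] H)
    (hr : ∀ a : H, r * Δ a = (TensorProduct.comm k H H) (Δ a) * r) (a : H) :
    psiD r * a = 𝒮 (𝒮 a) * psiD r := by
  rw [← drinfeld_i a r, lemA r hr (Δ a), drinfeld_ii a r]


end

end DrinfeldAux

/-- The Drinfel'd element `u = Σ S(bᵢ) aᵢ` of a quasitriangular Hopf algebra intertwines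
the square of the antipode with the identity: `u · a = S²(a) · u` for all `a`. -/


theorem drinfeld_element_intertwines {k H : Type*} [CommRing k] [Ring H] [HopfAlgebra k H]
    (r : H ⊗[k] H) (hr : IsRMatrix k H r) (a : H) :
    drinfeldElement k H r * a =
      HopfAlgebra.antipode (R := k) (HopfAlgebra.antipode (R := k) a) * drinfeldElement k H r := by
  have h : drinfeldElement k H r = DrinfeldAux.psiD r := rfl
  rw [h]
  exact DrinfeldAux.drinfeld_main r hr.intertwine a
end

section
/- In a braided rigid monoidal category, the Drinfel'd morphism u_X : X → X^{★★}, defined as the composite (up to unitors/associators) (id ⊗ coev_{X^★}) ≫ (β_{X,X^★} ⊗ id) ≫ (ev_X ⊗ id) appropriately rebracketed, is an isomorphism natural in X. -/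
open CategoryTheory MonoidalCategory

variable {C : Type*} [Category C] [MonoidalCategory C] [BraidedCategory C]
  [RightRigidCategory C]

/-- The Drinfel'd morphism `u_X : X ⟶ Xᘁᘁ` of a braided rigid monoidal category, built from
the coevaluation of `Xᘁ`, the braiding `β_{X,Xᘁ}` and the evaluation of `X`. -/
noncomputable def drinfeldMorphism (X : C) : X ⟶ (((Xᘁ : C))ᘁ : C) :=
  (ρ_ X).inv ≫ (X ◁ η_ (Xᘁ : C) (((Xᘁ : C))ᘁ)) ≫
    (α_ X (Xᘁ : C) (((Xᘁ : C))ᘁ : C)).inv ≫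
      ((β_ X (Xᘁ : C)).hom ▷ (((Xᘁ : C))ᘁ : C)) ≫
        (ε_ X (Xᘁ) ▷ (((Xᘁ : C))ᘁ : C)) ≫ (λ_ (((Xᘁ : C))ᘁ : C)).hom

/-! Braiding turns the chosen exact pairing `(X, Xᘁ)` into an exact pairing `(Xᘁ, X)`, so `Xᘁ`
has two right duals, `Xᘁᘁ` and `X`, and `u_X` is the canonical comparison isomorphism
`rightDualIso` between them. Naturality holds because mates are functorial in the choice of
duals, and the mate of `fᘁ` with respect to the braided pairings is `f` itself. -/

namespace CategoryTheory

section Monoidal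

variable {D : Type*} [Category D] [MonoidalCategory D]

theorem rightAdjointMate_comp_rightDualIso_hom {A B A₁ A₂ B₁ B₂ : D}
    (pA₁ : ExactPairing A A₁) (pA₂ : ExactPairing A A₂)
    (pB₁ : ExactPairing B B₁) (pB₂ : ExactPairing B B₂) (g : A ⟶ B) :
    @rightAdjointMate D _ _ A B ⟨A₁⟩ ⟨B₁⟩ g ≫ (rightDualIso pA₁ pA₂).hom =
      (rightDualIso pB₁ pB₂).hom ≫ @rightAdjointMate D _ _ A B ⟨A₂⟩ ⟨B₂⟩ g := by
  dsimp only [rightDualIso]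
  rw [← @comp_rightAdjointMate D _ _ A A B ⟨A₂⟩ ⟨A₁⟩ ⟨B₁⟩,
    ← @comp_rightAdjointMate D _ _ A B B ⟨A₂⟩ ⟨B₂⟩ ⟨B₁⟩, Category.id_comp, Category.comp_id]

end Monoidal

namespace BraidedCategory

variable {D : Type*} [Category D] [MonoidalCategory D] [BraidedCategory D]

abbrev rightDualHasRightDual (X : D) [HasRightDual X] : HasRightDual Xᘁ where
  rightDual := X
  exact := exactPairing_swap X Xᘁ

theorem rightAdjointMate_rightAdjointMate_swap {X Y : D} [HasRightDual X] [HasRightDual Y]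
    (f : X ⟶ Y) :
    @rightAdjointMate D _ _ Yᘁ Xᘁ (rightDualHasRightDual Y) (rightDualHasRightDual X) (fᘁ) = f := by
  -- Both sides are determined by their composites with the braided evaluations `β ≫ ε`.
  have hev : X ◁ fᘁ ≫ (β_ X Xᘁ).hom ≫ ε_ X Xᘁ = f ▷ Yᘁ ≫ (β_ Y Yᘁ).hom ≫ ε_ Y Yᘁ := by
    rw [braiding_naturality_right_assoc, rightAdjointMate_comp_evaluation,
      braiding_naturality_left_assoc]
  have h₁ := @tensorRightHomEquiv_whiskerLeft_comp_evaluation D _ _ Yᘁ Xᘁ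
    (rightDualHasRightDual Y) (rightDualHasRightDual X) (fᘁ)
  have h₂ := @tensorRightHomEquiv_whiskerRight_comp_evaluation D _ _ Yᘁ X
    (rightDualHasRightDual Y) f
  exact (cancel_mono (λ_ Y).inv).1 (h₁.symm.trans ((congrArg _ hev).trans h₂))

end BraidedCategory

end CategoryTheory

open CategoryTheory.BraidedCategory in
theorem drinfeldMorphism_eq_rightDualIso_hom (X : C) :
    drinfeldMorphism X = (rightDualIso (exactPairing_swap X Xᘁ) HasRightDual.exact).hom := by
  simp only [drinfeldMorphism, rightDualIso, rightAdjointMate, whiskerLeft_id, id_whiskerRight,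
    Category.id_comp]
  rw [← comp_whiskerRight_assoc]
  rfl

/-- In a braided rigid monoidal category, the Drinfel'd morphism `u_X : X ⟶ Xᘁᘁ` is an
isomorphism natural in `X`. -/
theorem drinfeldMorphism_isIso_and_natural :
    (∀ X : C, IsIso (drinfeldMorphism X)) ∧
    (∀ {X Y : C} (f : X ⟶ Y),
      f ≫ drinfeldMorphism Y = drinfeldMorphism X ≫ ((fᘁ)ᘁ)) := by
  refine ⟨fun X => ?_, fun {X Y} f => ?_⟩
  · rw [drinfeldMorphism_eq_rightDualIso_hom]
    infer_instance
  · have h := rightAdjointMate_comp_rightDualIso_hom (BraidedCategory.exactPairing_swap Y Yᘁ)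
      HasRightDual.exact (BraidedCategory.exactPairing_swap X Xᘁ) HasRightDual.exact (fᘁ)
    rwa [BraidedCategory.rightAdjointMate_rightAdjointMate_swap,
      ← drinfeldMorphism_eq_rightDualIso_hom, ← drinfeldMorphism_eq_rightDualIso_hom] at h
end
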